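/- Let B, C > 0 and A = B²/(27C). Then f_B(Q) ≥ 0 for every symmetric traceless real 3×3 matrix Q, and f_B(Q) = 0 if and only if Q = 0 or Q = (B/(3C))·(n nᵀ − I/3) for some unit vector n ∈ ℝ³. In other words, at the nematic–isotropic transition temperature the bulk potential is minimised exactly by the isotropic phase and the continuum of uniaxial states with scalar order parameter s = B/(3C). -/

import Mathlib

/-!
Write `p = tr Q²`, `q = tr Q³` and `s = B / (3C)`. At `A = B² / (27C)` one has
`p · f_B = (C/6) (s p - 3q)² + (C/4) (p³ - 6q²)`, and `p³ - 6q² ≥ 0` for traceless symmetric `Q`,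
being twice the discriminant of its characteristic polynomial. Hence `f_B ≥ 0`, and `f_B = 0` with
`Q ≠ 0` forces `p = 2s²/3`, `q = 2s³/9`. Then every eigenvalue of `Q` is a root of
`X³ - (p/2) X - q/3 = (X - 2s/3) (X + s/3)²`, so the spectrum is that of `s (n nᵀ - I/3)` and the
spectral theorem gives `Q = s (n nᵀ - I/3)` with `n` the eigenvector of the eigenvalue `2s/3`.
-/

open Matrix

namespace Matrix

variable {n : Type*} [Fintype n]

theorem isIdempotentElem_vecMulVec_self {R : Type*} [CommSemiring R] {v : n → R}
    (hv : v ⬝ᵥ v = 1) : IsIdempotentElem (vecMulVec v v) := by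
  rw [IsIdempotentElem, vecMulVec_mul_vecMulVec, hv, one_smul]

namespace IsHermitian

variable [DecidableEq n]

theorem trace_pow_eq_sum_eigenvalues_pow {𝕜 : Type*} [RCLike 𝕜] {A : Matrix n n 𝕜}
    (hA : A.IsHermitian) (k : ℕ) : (A ^ k).trace = ∑ i, (hA.eigenvalues i : 𝕜) ^ k := by
  conv_lhs => rw [hA.spectral_theorem, ← map_pow, Unitary.conjStarAlgAut_apply, trace_mul_cycle,
    Unitary.coe_star_mul_self, one_mul, diagonal_pow, trace_diagonal]
  rfl

theorem dotProduct_eigenvectorBasis_self {A : Matrix n n ℝ} (hA : A.IsHermitian) (k : n) :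
    ⇑(hA.eigenvectorBasis k) ⬝ᵥ ⇑(hA.eigenvectorBasis k) = 1 := by
  have := hA.eigenvectorBasis.inner_eq_one k
  rwa [EuclideanSpace.inner_eq_star_dotProduct, star_trivial] at this

theorem eq_smul_one_add_smul_vecMulVec {A : Matrix n n ℝ} (hA : A.IsHermitian) {k : n}
    {a b : ℝ} (h : hA.eigenvalues = fun i => if i = k then a else b) :
    A = b • 1 + (a - b) • vecMulVec (hA.eigenvectorBasis k) (hA.eigenvectorBasis k) := by
  have hdiag : diagonal (RCLike.ofReal ∘ hA.eigenvalues) =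
      b • (1 : Matrix n n ℝ) + (a - b) • vecMulVec (Pi.single k 1) (Pi.single k 1) := by
    ext i j
    rcases eq_or_ne i j with rfl | hij
    · rcases eq_or_ne i k with rfl | hik <;> simp [vecMulVec_apply, *]
    · simp only [diagonal_apply_ne _ hij, add_apply, smul_apply, one_apply_ne hij,
        vecMulVec_apply, Pi.single_apply]
      split_ifs <;> simp_all
  conv_lhs => rw [hA.spectral_theorem, hdiag, map_add, map_smul, map_smul, map_one,
    Unitary.conjStarAlgAut_apply, mul_vecMulVec, vecMulVec_mul, eigenvectorUnitary_mulVec,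
    star_eq_conjTranspose, conjTranspose_eq_transpose_of_trivial, vecMul_transpose,
    eigenvectorUnitary_mulVec]

end IsHermitian

end Matrix

namespace Fin

variable {v : Fin 3 → ℝ}

theorem six_mul_sq_sum_cube_le_sum_sq_cube (hv : ∑ i, v i = 0) :
    6 * (∑ i, v i ^ 3) ^ 2 ≤ (∑ i, v i ^ 2) ^ 3 := by
  simp only [Fin.sum_univ_three] at *
  have hv2 : v 2 = -v 0 - v 1 := by linarith
  have key : (v 0 ^ 2 + v 1 ^ 2 + v 2 ^ 2) ^ 3 - 6 * (v 0 ^ 3 + v 1 ^ 3 + v 2 ^ 3) ^ 2 =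
      2 * ((v 0 - v 1) * (v 1 - v 2) * (v 2 - v 0)) ^ 2 := by
    rw [hv2]; ring
  nlinarith [sq_nonneg ((v 0 - v 1) * (v 1 - v 2) * (v 2 - v 0))]

theorem eq_or_eq_of_sum_sq_of_sum_cube {s : ℝ} (hv : ∑ i, v i = 0)
    (hp : ∑ i, v i ^ 2 = 2 * s ^ 2 / 3) (hq : ∑ i, v i ^ 3 = 2 * s ^ 3 / 9) (i : Fin 3) :
    v i = 2 * s / 3 ∨ v i = -s / 3 := by
  -- the elementary symmetric functions are `e₁ = 0`, `e₂ = -p / 2`, `e₃ = q / 3` (Newton)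
  have hroot : v i ^ 3 - (∑ j, v j ^ 2) / 2 * v i - (∑ j, v j ^ 3) / 3 = 0 := by
    simp only [Fin.sum_univ_three] at *
    have hv2 : v 2 = -v 0 - v 1 := by linarith
    fin_cases i <;> simp [hv2] <;> ring
  rw [hp, hq] at hroot
  have hfac : (v i - 2 * s / 3) * (v i + s / 3) ^ 2 = 0 := by linear_combination hroot
  rcases mul_eq_zero.mp hfac with h | h
  · exact .inl (by linarith)
  · exact .inr (by linarith [pow_eq_zero_iff two_ne_zero |>.mp h])

theorem exists_eq_ite_of_forall_eq_or_eq {s : ℝ} (hs : s ≠ 0) (hv : ∑ i, v i = 0)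
    (h : ∀ i, v i = 2 * s / 3 ∨ v i = -s / 3) :
    ∃ k, v = fun i => if i = k then 2 * s / 3 else -s / 3 := by
  rw [Fin.sum_univ_three] at hv
  rcases h 0 with h0 | h0 <;> rcases h 1 with h1 | h1 <;> rcases h 2 with h2 | h2 <;>
    try exact absurd (by linarith) hs
  exacts [⟨0, funext fun i => by fin_cases i <;> simp [h0, h1, h2]⟩,
    ⟨1, funext fun i => by fin_cases i <;> simp [h0, h1, h2]⟩,
    ⟨2, funext fun i => by fin_cases i <;> simp [h0, h1, h2]⟩]

end Fin

/-- `f_B` as a function of the invariants `p = tr Q²` and `q = tr Q³`. -/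
noncomputable def bulkPotential (A B C p q : ℝ) : ℝ := A / 2 * p - B / 3 * q + C / 4 * p ^ 2

noncomputable def uniaxial (s : ℝ) (n : Fin 3 → ℝ) : Matrix (Fin 3) (Fin 3) ℝ :=
  s • (vecMulVec n n - (1 / 3 : ℝ) • 1)

section Transition

variable {A B C : ℝ}

theorem mul_bulkPotential_eq (hC : C ≠ 0) (hA : A = B ^ 2 / (27 * C)) (p q : ℝ) :
    p * bulkPotential A B C p q =
      C / 6 * (B / (3 * C) * p - 3 * q) ^ 2 + C / 4 * (p ^ 3 - 6 * q ^ 2) := by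
  subst hA
  unfold bulkPotential
  field_simp
  ring

theorem bulkPotential_nonneg (hC : 0 < C) (hA : A = B ^ 2 / (27 * C)) {p q : ℝ}
    (hpq : 6 * q ^ 2 ≤ p ^ 3) : 0 ≤ bulkPotential A B C p q := by
  have hp : 0 ≤ p := by
    by_contra! hp
    nlinarith [pow_pos (neg_pos.mpr hp) 3, sq_nonneg q]
  rcases hp.eq_or_lt with rfl | hp
  · have hq : q = 0 := by nlinarith [sq_nonneg q]
    simp [bulkPotential, hq]
  · refine nonneg_of_mul_nonneg_right ?_ hp
    rw [mul_bulkPotential_eq hC.ne' hA]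
    have : 0 ≤ C / 4 * (p ^ 3 - 6 * q ^ 2) := mul_nonneg (by positivity) (by linarith)
    positivity

theorem bulkPotential_eq_zero (hC : 0 < C) (hA : A = B ^ 2 / (27 * C)) {p q : ℝ}
    (hpq : 6 * q ^ 2 ≤ p ^ 3) (hp : p ≠ 0) (h : bulkPotential A B C p q = 0) :
    p = 2 * (B / (3 * C)) ^ 2 / 3 ∧ q = 2 * (B / (3 * C)) ^ 3 / 9 := by
  have key := mul_bulkPotential_eq hC.ne' hA p q
  set s := B / (3 * C)
  rw [h, mul_zero, eq_comm] at key
  obtain ⟨hsq, hdisc⟩ := (add_eq_zero_iff_of_nonneg (by positivity)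
    (mul_nonneg (by positivity) (by linarith))).mp key
  simp only [mul_eq_zero, div_eq_zero_iff, hC.ne', OfNat.ofNat_ne_zero, or_self, false_or,
    pow_eq_zero_iff two_ne_zero] at hsq hdisc
  have hq : q = s * p / 3 := by linarith
  have hp' : p = 2 * s ^ 2 / 3 := by
    have : p ^ 2 * (p - 2 * s ^ 2 / 3) = 0 := by rw [hq] at hdisc; linear_combination hdisc
    simpa [hp, sub_eq_zero] using this
  exact ⟨hp', by rw [hq, hp']; ring⟩

variable {s : ℝ} {n : Fin 3 → ℝ}

theorem trace_uniaxial_mul_self (hn : n ⬝ᵥ n = 1) :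
    trace (uniaxial s n * uniaxial s n) = 2 * s ^ 2 / 3 := by
  simp [uniaxial, sub_mul, mul_sub, (isIdempotentElem_vecMulVec_self hn).eq, trace_vecMulVec, hn]
  ring

theorem trace_uniaxial_mul_self_mul_self (hn : n ⬝ᵥ n = 1) :
    trace (uniaxial s n * uniaxial s n * uniaxial s n) = 2 * s ^ 3 / 9 := by
  simp [uniaxial, sub_mul, mul_sub, (isIdempotentElem_vecMulVec_self hn).eq, trace_vecMulVec, hn]
  ring

theorem bulkPotential_uniaxial (hC : C ≠ 0) (hA : A = B ^ 2 / (27 * C)) (hn : n ⬝ᵥ n = 1) :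
    bulkPotential A B C (trace (uniaxial (B / (3 * C)) n * uniaxial (B / (3 * C)) n))
      (trace (uniaxial (B / (3 * C)) n * uniaxial (B / (3 * C)) n * uniaxial (B / (3 * C)) n))
      = 0 := by
  rw [trace_uniaxial_mul_self hn, trace_uniaxial_mul_self_mul_self hn, hA, bulkPotential]
  field_simp
  ring

end Transition

theorem stmt6_general (A B C : ℝ) (hC : 0 < C) (hA : A = B ^ 2 / (27 * C)) :
    ∀ Q : Matrix (Fin 3) (Fin 3) ℝ, Qᵀ = Q → Matrix.trace Q = 0 →
      ((A / 2) * Matrix.trace (Q * Q) - (B / 3) * Matrix.trace (Q * Q * Q)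
          + (C / 4) * (Matrix.trace (Q * Q)) ^ 2 ≥ 0) ∧
      ((A / 2) * Matrix.trace (Q * Q) - (B / 3) * Matrix.trace (Q * Q * Q)
          + (C / 4) * (Matrix.trace (Q * Q)) ^ 2 = 0 ↔
        Q = 0 ∨ ∃ n : Fin 3 → ℝ, n ⬝ᵥ n = 1 ∧
          Q = (B / (3 * C)) • (Matrix.vecMulVec n n - (1 / 3 : ℝ) • 1)) := by
  intro Q hsym htr
  have hQ : Q.IsHermitian := (conjTranspose_eq_transpose_of_trivial Q).trans hsym
  set ev := hQ.eigenvalues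
  have hsum : ∑ i, ev i = 0 := by simpa [hQ.trace_eq_sum_eigenvalues] using htr
  have hp : trace (Q * Q) = ∑ i, ev i ^ 2 := by
    simpa [sq] using hQ.trace_pow_eq_sum_eigenvalues_pow 2
  have hq : trace (Q * Q * Q) = ∑ i, ev i ^ 3 := by
    simpa [pow_three'] using hQ.trace_pow_eq_sum_eigenvalues_pow 3
  have hpq : 6 * trace (Q * Q * Q) ^ 2 ≤ trace (Q * Q) ^ 3 :=
    hp ▸ hq ▸ Fin.six_mul_sq_sum_cube_le_sum_sq_cube hsum
  change 0 ≤ bulkPotential A B C _ _ ∧ (bulkPotential A B C _ _ = 0 ↔ _)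
  refine ⟨bulkPotential_nonneg hC hA hpq, fun h => ?_, ?_⟩
  · by_cases hp0 : trace (Q * Q) = 0
    · exact .inl (trace_conjTranspose_mul_self_eq_zero_iff.mp (hQ.eq.symm ▸ hp0))
    obtain ⟨hp', hq'⟩ := bulkPotential_eq_zero hC hA hpq hp0 h
    have hs : B / (3 * C) ≠ 0 := fun hs => hp0 (by simpa [hs] using hp')
    obtain ⟨k, hk⟩ := Fin.exists_eq_ite_of_forall_eq_or_eq hs hsum
      (Fin.eq_or_eq_of_sum_sq_of_sum_cube hsum (hp ▸ hp') (hq ▸ hq'))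
    refine .inr ⟨_, hQ.dotProduct_eigenvectorBasis_self k, ?_⟩
    exact (hQ.eq_smul_one_add_smul_vecMulVec hk).trans (by module)
  · rintro (rfl | ⟨n, hn, rfl⟩)
    · simp [bulkPotential]
    · exact bulkPotential_uniaxial hC.ne' hA hn

/-- For `B, C > 0` and `A = B²/(27C)` (the nematic–isotropic transition
temperature), the Landau–de Gennes bulk potential satisfies `f_B(Q) ≥ 0` for every
symmetric traceless real 3×3 matrix `Q`, with `f_B(Q) = 0` iff `Q = 0` or
`Q = (B/(3C)) • (n nᵀ - I/3)` for some unit vector `n ∈ ℝ³`. -/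
theorem stmt6 (A B C : ℝ) (hB : 0 < B) (hC : 0 < C) (hA : A = B ^ 2 / (27 * C)) :
    ∀ Q : Matrix (Fin 3) (Fin 3) ℝ, Qᵀ = Q → Matrix.trace Q = 0 →
      ((A / 2) * Matrix.trace (Q * Q) - (B / 3) * Matrix.trace (Q * Q * Q)
          + (C / 4) * (Matrix.trace (Q * Q)) ^ 2 ≥ 0) ∧
      ((A / 2) * Matrix.trace (Q * Q) - (B / 3) * Matrix.trace (Q * Q * Q)
          + (C / 4) * (Matrix.trace (Q * Q)) ^ 2 = 0 ↔
        Q = 0 ∨ ∃ n : Fin 3 → ℝ, n ⬝ᵥ n = 1 ∧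
          Q = (B / (3 * C)) • (Matrix.vecMulVec n n - (1 / 3 : ℝ) • 1)) :=
  stmt6_general A B C hC hA
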